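/- arXiv:2004.14032 — 5 statements merged into one kernel-verified Lean document; each statement's English description precedes it below -/
import Mathlib

section
/- Let m, N ≥ 1 be integers and let v_0, …, v_{m−1} be distinct positive real numbers. Set σ_j² = Σ_{k=0}^{m−1} v_j^{2k}, σ² = Σ_{j=0}^{m−1} σ_j², γ₋ = min_j v_j, γ₊ = max_j v_j, and α = ((m−1)/σ²)^{(m−1)/2} · ∏_{0≤j<k≤m−1} |v_j − v_k|. For t > 0 define Ψ_N(t) = (1−t²)/(1−t^{2/N}) if t ≠ 1 and Ψ_N(1) = N. Let W_N be the (mN)×m matrix with entries (W_N)_{ij} = v_j^{(i−1)/N} for 1 ≤ i ≤ mN and 0 ≤ j ≤ m−1. Then for every x ∈ ℂ^m, α² Ψ_N(γ₋) ‖x‖² ≤ ‖W_N x‖² ≤ σ² Ψ_N(γ₊) ‖x‖². -/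
open MeasureTheory Matrix
open scoped Real BigOperators

noncomputable section

/-- Fourier transform normalized as `f̂ ξ = ∫ f t · e^{-i t ξ} dt`. -/
def FT (f : ℝ → ℂ) (ξ : ℝ) : ℂ :=
  ∫ t : ℝ, Complex.exp (-(Complex.I * t * ξ)) * f t

/-- The (real-valued on `[-c,c]`) values of `φ̂` for a kernel of the class `Φ_c`. -/
def phihat (φ : ℝ → ℂ) (ξ : ℝ) : ℝ := (FT φ ξ).re

/-- The class `Φ_c`: `φ ∈ L¹`, `φ̂(0) = 1` and `κ ≤ φ̂ ≤ 1` on `[-c,c]` for some `κ > 0`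
(in particular `φ̂` is real-valued there). -/
def InPhi (c : ℝ) (φ : ℝ → ℂ) : Prop :=
  Integrable φ ∧ FT φ 0 = 1 ∧
    ∃ κ : ℝ, 0 < κ ∧ ∀ ξ : ℝ, |ξ| ≤ c →
      FT φ ξ = ((FT φ ξ).re : ℂ) ∧ κ ≤ (FT φ ξ).re ∧ (FT φ ξ).re ≤ 1

/-- `2c`-periodization of `g·1_{[-c,c)}`: for every `x` there is a unique `k ∈ ℤ` with
`x - 2ck ∈ [-c,c)`, namely `k = ⌊(x+c)/(2c)⌋`. -/
def per (c : ℝ) (g : ℝ → ℝ) (x : ℝ) : ℝ :=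
  g (x - 2*c*(⌊(x + c)/(2*c)⌋ : ℝ))

/-- `2c`-periodization of a complex-valued `g·1_{[-c,c)}`. -/
def perC (c : ℝ) (g : ℝ → ℂ) (x : ℝ) : ℂ :=
  g (x - 2*c*(⌊(x + c)/(2*c)⌋ : ℝ))

/-- The sampled diffusion matrix `ℬ_m(ξ)`. -/
def Bmat (c : ℝ) (g : ℝ → ℝ) (m : ℕ) (ξ : ℝ) : Matrix (Fin m) (Fin m) ℂ :=
  Matrix.of fun j k : Fin m =>
    (((∫ t in (0:ℝ)..1,
        per c g (2*c/(m:ℝ)*(ξ + (j.val : ℝ))) ^ t *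
          per c g (2*c/(m:ℝ)*(ξ + (k.val : ℝ))) ^ t) : ℝ) : ℂ)

/-- The value `f_t(x)` of the evolved signal, computed by Fourier inversion from
`f̂_t = ĝ^t·f̂` where `F = f̂` is supported in `[-c,c]`. -/
def heatSample (c : ℝ) (g : ℝ → ℝ) (F : ℝ → ℂ) (t x : ℝ) : ℂ :=
  ((1/(2*Real.pi) : ℝ) : ℂ) *
    ∫ ξ in (-c)..c, F ξ * (((g ξ) ^ t : ℝ) : ℂ) * Complex.exp (Complex.I * x * ξ)

/-- The vectorization `𝐟(ξ) = ((f̂)_p(2c(ξ+j)/m))_{j=0,…,m-1}`. -/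
def fvec (c : ℝ) (m : ℕ) (F : ℝ → ℂ) (ξ : ℝ) : Fin m → ℂ :=
  fun j => perC c F (2*c/(m:ℝ)*(ξ + (j.val : ℝ)))

/-- `Ψ_N(t) = (1-t²)/(1-t^{2/N})` for `t ≠ 1`, `Ψ_N(1) = N`. -/
def PsiFn (N : ℕ) (t : ℝ) : ℝ :=
  if t = 1 then (N : ℝ) else (1 - t^2)/(1 - t ^ ((2:ℝ)/(N:ℝ)))

/-- `∏_{0 ≤ j < k ≤ m-1} |v_j - v_k|`. -/
def pairProd (m : ℕ) (v : Fin m → ℝ) : ℝ :=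
  ∏ p ∈ Finset.univ.filter (fun p : Fin m × Fin m => p.1 < p.2), |v p.1 - v p.2|

/-- `σ² = Σ_j σ_j²` with `σ_j² = Σ_{k=0}^{m-1} v_j^{2k}`. -/
def sigmaSq (m : ℕ) (v : Fin m → ℝ) : ℝ :=
  ∑ j : Fin m, ∑ k : Fin m, v j ^ (2*k.val)

/-- The `(mN) × m` Vandermonde-type matrix `W_N` with entries `v_j^{(i-1)/N}`, `1 ≤ i ≤ mN`. -/
def VandW (m N : ℕ) (v : Fin m → ℝ) : Matrix (Fin (m*N)) (Fin m) ℂ :=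
  Matrix.of fun i j => (((v j ^ ((i.val : ℝ)/(N : ℝ))) : ℝ) : ℂ)

/-- `Δ_m(ξ) = ∏_{0≤j<k≤m-1} |(φ̂)_p(2c(ξ+j)/m) - (φ̂)_p(2c(ξ+k)/m)|`. -/
def DeltaM (c : ℝ) (g : ℝ → ℝ) (m : ℕ) (ξ : ℝ) : ℝ :=
  ∏ p ∈ Finset.univ.filter (fun p : Fin m × Fin m => p.1 < p.2),
    |per c g (2*c/(m:ℝ)*(ξ + (p.1.val : ℝ))) - per c g (2*c/(m:ℝ)*(ξ + (p.2.val : ℝ)))|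

/-- `(sinc(c·) * φ_t)(x) = (1/(2c)) ∫_{-c}^{c} φ̂(ξ)^t e^{ixξ} dξ`. -/
def sincConv (c : ℝ) (g : ℝ → ℝ) (t x : ℝ) : ℂ :=
  ((1/(2*c) : ℝ) : ℂ) *
    ∫ ξ in (-c)..c, (((g ξ) ^ t : ℝ) : ℂ) * Complex.exp (Complex.I * x * ξ)

/-- `c_{φ,L} = 2(κ^{2L} - 1)/(π² ln κ)`. -/
def cPhiL (κ L : ℝ) : ℝ := 2*(κ ^ (2*L) - 1)/(Real.pi^2 * Real.log κ)

/-- Legendre polynomial `P_k` via Rodrigues' formula. -/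
def legendreP (k : ℕ) : Polynomial ℝ :=
  Polynomial.C (1/((2:ℝ)^k * (Nat.factorial k : ℝ))) *
    ((fun q : Polynomial ℝ => Polynomial.derivative q)^[k] ((Polynomial.X^2 - 1)^k))

/-- Lower Beurling density. -/
def lowerDensity (Λ : Set ℝ) : ℝ :=
  Filter.liminf
    (fun r : ℝ => ⨅ x : ℝ, ((Λ ∩ Set.Icc (x - r) (x + r)).ncard : ℝ)/(2*r)) Filter.atTop

/-- Upper Beurling density. -/
def upperDensity (Λ : Set ℝ) : ℝ :=
  Filter.limsup
    (fun r : ℝ => ⨆ x : ℝ, ((Λ ∩ Set.Icc (x - r) (x + r)).ncard : ℝ)/(2*r)) Filter.atTop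

/-- Fourier transform of the Gaussian heat kernel at time 1: `φ̂(ξ) = e^{-σ²ξ²}`. -/
def GaussHat (σ : ℝ) (ξ : ℝ) : ℝ := Real.exp (-(σ^2 * ξ^2))

/-!
Index the rows of `W_N` as `i = kN + r` with `0 ≤ k < m` and `0 ≤ r < N`. Since
`v_j^{i/N} = v_j^k v_j^{r/N}`, we get `‖W_N x‖² = Σ_r ‖V D_r x‖²`, where `V = (v_j^k)_{k,j}` is the
square Vandermonde matrix and `D_r = diag(v_j^{r/N})`. The entries of `D_r` lie between
`γ₋^{r/N}` and `γ₊^{r/N}`, and `Σ_r t^{2r/N} = Ψ_N(t)` is a geometric sum, so it suffices to bound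
`V`. The upper bound is Cauchy–Schwarz: `‖Vy‖² ≤ ‖V‖_F² ‖y‖² = σ² ‖y‖²`. For the lower bound, let
`λ` be any eigenvalue of `V*V`. The remaining `m - 1` eigenvalues are nonnegative and sum to at
most `tr(V*V) = σ²`, so by AM–GM
`∏_{j<k} |v_j - v_k|² = det(V*V) ≤ λ (σ²/(m-1))^{m-1}`.
-/

open Finset
open scoped ComplexOrder

lemma Real.prod_le_sum_div_card_pow {ι : Type*} {s : Finset ι} {z : ι → ℝ}
    (hz : ∀ i ∈ s, 0 ≤ z i) : ∏ i ∈ s, z i ≤ ((∑ i ∈ s, z i) / #s) ^ #s := by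
  rcases s.eq_empty_or_nonempty with rfl | hs
  · simp
  have hcard : (0 : ℝ) < #s := by exact_mod_cast hs.card_pos
  have hAM := Real.geom_mean_le_arith_mean s (fun _ => 1) z (fun _ _ => zero_le_one)
    (by simpa using hcard) hz
  simp only [Real.rpow_one, sum_const, nsmul_eq_mul, mul_one, one_mul] at hAM
  calc ∏ i ∈ s, z i = ((∏ i ∈ s, z i) ^ (#s : ℝ)⁻¹) ^ #s := by
        rw [← Real.rpow_natCast, ← Real.rpow_mul (prod_nonneg hz), inv_mul_cancel₀ hcard.ne',
          Real.rpow_one]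
    _ ≤ _ := by gcongr; exact Real.rpow_nonneg (prod_nonneg hz) _

lemma Real.card_sub_one_div_sum_pow_mul_prod_le {ι : Type*} [Fintype ι] [DecidableEq ι]
    {μ : ι → ℝ} (hμ : ∀ i, 0 ≤ μ i) (i₀ : ι) :
    (((Fintype.card ι - 1 : ℕ) : ℝ) / ∑ i, μ i) ^ (Fintype.card ι - 1) * ∏ i, μ i ≤ μ i₀ := by
  set n := Fintype.card ι - 1
  have hprod : ∏ i, μ i ≤ μ i₀ * ((∑ i, μ i) / n) ^ n := by
    have hcard : #(univ.erase i₀) = n := by rw [card_erase_of_mem (mem_univ _), card_univ]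
    rw [← mul_prod_erase _ _ (mem_univ i₀)]
    refine mul_le_mul_of_nonneg_left ?_ (hμ i₀)
    calc ∏ i ∈ univ.erase i₀, μ i ≤ ((∑ i ∈ univ.erase i₀, μ i) / n) ^ n :=
          hcard ▸ Real.prod_le_sum_div_card_pow fun i _ => hμ i
      _ ≤ ((∑ i, μ i) / n) ^ n := by
          gcongr
          · exact div_nonneg (sum_nonneg fun i _ => hμ i) n.cast_nonneg
          · exact fun i _ _ => hμ i
          · exact subset_univ _
  rw [← inv_div, inv_pow]
  rcases (pow_nonneg (div_nonneg (sum_nonneg fun i _ => hμ i) n.cast_nonneg) n).eq_or_lt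
    with h0 | hpos
  · rw [← h0, _root_.inv_zero, zero_mul]
    exact hμ i₀
  · rwa [inv_mul_le_iff₀ hpos, mul_comm]

namespace Matrix

variable {ι κ 𝕜 : Type*} [Fintype ι] [Fintype κ] [RCLike 𝕜]

lemma re_star_dotProduct_self (z : ι → 𝕜) : RCLike.re (star z ⬝ᵥ z) = ∑ i, ‖z i‖ ^ 2 := by
  simp only [dotProduct, Pi.star_apply, RCLike.star_def, RCLike.conj_mul, map_sum]
  norm_cast

lemma re_star_dotProduct_conjTranspose_mul_self_mulVec (A : Matrix κ ι 𝕜) (y : ι → 𝕜) :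
    RCLike.re (star y ⬝ᵥ ((Aᴴ * A) *ᵥ y)) = ∑ k, ‖(A *ᵥ y) k‖ ^ 2 := by
  rw [← mulVec_mulVec, dotProduct_mulVec, ← star_mulVec, re_star_dotProduct_self]

lemma IsHermitian.posSemidef_sub_smul_one [DecidableEq ι] {G : Matrix ι ι 𝕜} (hG : G.IsHermitian)
    {c : ℝ} (hc : ∀ i, c ≤ hG.eigenvalues i) : (G - (c : 𝕜) • 1).PosSemidef := by
  have hconj : G - (c : 𝕜) • 1 = Unitary.conjStarAlgAut 𝕜 _ hG.eigenvectorUnitary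
      (diagonal (RCLike.ofReal ∘ fun i => hG.eigenvalues i - c)) := by
    have hdiag : diagonal (RCLike.ofReal ∘ fun i => hG.eigenvalues i - c)
        = diagonal (RCLike.ofReal ∘ hG.eigenvalues) - (c : 𝕜) • (1 : Matrix ι ι 𝕜) := by
      rw [← diagonal_one, ← diagonal_smul, diagonal_sub]
      congr 1
      ext i
      simp
    rw [hdiag, map_sub, map_smul, map_one, ← hG.spectral_theorem]
  rw [hconj, Unitary.conjStarAlgAut_apply,
    Unitary.isUnit_coe.posSemidef_star_right_conjugate_iff, posSemidef_diagonal_iff]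
  intro i
  simpa using hc i

lemma IsHermitian.mul_sum_norm_sq_le [DecidableEq ι] {G : Matrix ι ι 𝕜} (hG : G.IsHermitian)
    {c : ℝ} (hc : ∀ i, c ≤ hG.eigenvalues i) (x : ι → 𝕜) :
    c * ∑ i, ‖x i‖ ^ 2 ≤ RCLike.re (star x ⬝ᵥ (G *ᵥ x)) := by
  have hpsd := (hG.posSemidef_sub_smul_one hc).re_dotProduct_nonneg x
  rw [sub_mulVec, dotProduct_sub, smul_mulVec, one_mulVec, dotProduct_smul, map_sub,
    smul_eq_mul, RCLike.re_ofReal_mul, re_star_dotProduct_self] at hpsd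
  linarith

lemma sum_norm_sq_mulVec_le (A : Matrix κ ι 𝕜) (y : ι → 𝕜) :
    ∑ k, ‖(A *ᵥ y) k‖ ^ 2 ≤ (∑ k, ∑ j, ‖A k j‖ ^ 2) * ∑ j, ‖y j‖ ^ 2 := by
  rw [sum_mul]
  refine sum_le_sum fun k _ => ?_
  calc ‖(A *ᵥ y) k‖ ^ 2 ≤ (∑ j, ‖A k j‖ * ‖y j‖) ^ 2 := by
        gcongr
        exact (norm_sum_le _ _).trans_eq (by simp only [norm_mul])
    _ ≤ _ := sum_mul_sq_le_sq_mul_sq _ _ _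

lemma sum_eigenvalues_conjTranspose_mul_self [DecidableEq ι] (A : Matrix κ ι 𝕜) :
    ∑ i, (isHermitian_conjTranspose_mul_self A).eigenvalues i = ∑ k, ∑ j, ‖A k j‖ ^ 2 := by
  have htr := (isHermitian_conjTranspose_mul_self A).trace_eq_sum_eigenvalues
  apply_fun RCLike.re at htr
  simp only [trace, diag_apply, mul_apply, conjTranspose_apply, RCLike.star_def,
    RCLike.conj_mul, map_sum] at htr
  norm_cast at htr
  rw [← htr, sum_comm]

lemma prod_eigenvalues_conjTranspose_mul_self [DecidableEq ι] (A : Matrix ι ι 𝕜) :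
    ∏ i, (isHermitian_conjTranspose_mul_self A).eigenvalues i = ‖A.det‖ ^ 2 := by
  have hdet := (isHermitian_conjTranspose_mul_self A).det_eq_prod_eigenvalues
  rw [det_mul, det_conjTranspose, RCLike.star_def, RCLike.conj_mul] at hdet
  exact_mod_cast hdet.symm

lemma card_sub_one_div_pow_mul_norm_det_sq_mul_le [DecidableEq ι] (A : Matrix ι ι 𝕜)
    (y : ι → 𝕜) :
    (((Fintype.card ι - 1 : ℕ) : ℝ) / ∑ k, ∑ j, ‖A k j‖ ^ 2) ^ (Fintype.card ι - 1) *
        ‖A.det‖ ^ 2 * ∑ j, ‖y j‖ ^ 2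
      ≤ ∑ k, ‖(A *ᵥ y) k‖ ^ 2 := by
  rw [← sum_eigenvalues_conjTranspose_mul_self, ← prod_eigenvalues_conjTranspose_mul_self,
    ← re_star_dotProduct_conjTranspose_mul_self_mulVec]
  exact (isHermitian_conjTranspose_mul_self A).mul_sum_norm_sq_le
    (fun i => Real.card_sub_one_div_sum_pow_mul_prod_le
      (eigenvalues_conjTranspose_mul_self_nonneg A) i) y

end Matrix

lemma sigmaSq_nonneg (m : ℕ) (v : Fin m → ℝ) : 0 ≤ sigmaSq m v :=
  sum_nonneg fun j _ => sum_nonneg fun k _ => by rw [pow_mul]; positivity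

lemma pairProd_eq_prod_prod_Ioi (m : ℕ) (v : Fin m → ℝ) :
    pairProd m v = ∏ i, ∏ j ∈ Ioi i, |v j - v i| := by
  rw [pairProd, prod_filter, Fintype.prod_prod_type]
  refine prod_congr rfl fun i _ => ?_
  rw [← prod_filter, filter_lt_eq_Ioi]
  exact prod_congr rfl fun j _ => abs_sub_comm _ _

lemma norm_det_vandermonde_ofReal_eq_pairProd (m : ℕ) (v : Fin m → ℝ) :
    ‖(vandermonde fun j => (v j : ℂ)).det‖ = pairProd m v := by
  rw [det_vandermonde, pairProd_eq_prod_prod_Ioi, norm_prod]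
  refine prod_congr rfl fun i _ => ?_
  rw [norm_prod]
  refine prod_congr rfl fun j _ => ?_
  rw [← Complex.ofReal_sub, Complex.norm_real, Real.norm_eq_abs]

lemma sum_sum_norm_sq_transpose_vandermonde_ofReal (m : ℕ) (v : Fin m → ℝ) :
    ∑ k, ∑ j, ‖(vandermonde fun j => (v j : ℂ))ᵀ k j‖ ^ 2 = sigmaSq m v := by
  rw [Finset.sum_comm, sigmaSq]
  refine sum_congr rfl fun j _ => sum_congr rfl fun k _ => ?_
  rw [transpose_apply, vandermonde_apply, ← Complex.ofReal_pow, Complex.norm_real,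
    Real.norm_eq_abs, sq_abs, ← pow_mul, mul_comm]

lemma VandW_mulVec_finProdFinEquiv {m N : ℕ} (hN : N ≠ 0) {v : Fin m → ℝ} (hpos : ∀ j, 0 < v j)
    (x : Fin m → ℂ) (k : Fin m) (r : Fin N) :
    (VandW m N v *ᵥ x) (finProdFinEquiv (k, r)) =
      ((vandermonde fun j => (v j : ℂ))ᵀ *ᵥ fun j => ((v j ^ ((r : ℝ) / N) : ℝ) : ℂ) * x j) k := by
  simp only [mulVec, dotProduct, VandW, of_apply, transpose_apply, vandermonde_apply]
  refine sum_congr rfl fun j _ => ?_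
  have hexp : ((finProdFinEquiv (k, r) : ℕ) : ℝ) / N = (k : ℕ) + (r : ℝ) / N := by
    rw [finProdFinEquiv_apply_val]
    push_cast
    field_simp
    ring
  rw [hexp, Real.rpow_add (hpos j), Real.rpow_natCast, Complex.ofReal_mul, Complex.ofReal_pow]
  ring

lemma sum_norm_sq_VandW_mulVec {m N : ℕ} (hN : N ≠ 0) {v : Fin m → ℝ} (hpos : ∀ j, 0 < v j)
    (x : Fin m → ℂ) :
    ∑ i, ‖(VandW m N v *ᵥ x) i‖ ^ 2 = ∑ r : Fin N, ∑ k,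
      ‖((vandermonde fun j => (v j : ℂ))ᵀ *ᵥ fun j => ((v j ^ ((r : ℝ) / N) : ℝ) : ℂ) * x j) k‖
        ^ 2 := by
  rw [← finProdFinEquiv.sum_comp, Fintype.sum_prod_type, sum_comm]
  simp only [VandW_mulVec_finProdFinEquiv hN hpos]

lemma PsiFn_eq_sum {N : ℕ} (hN : N ≠ 0) {γ : ℝ} (hγ : 0 < γ) :
    PsiFn N γ = ∑ r : Fin N, (γ ^ ((r : ℝ) / N)) ^ 2 := by
  set q := γ ^ ((2 : ℝ) / N)
  have hterm : ∀ r : ℕ, (γ ^ ((r : ℝ) / N)) ^ 2 = q ^ r := by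
    intro r
    rw [← Real.rpow_natCast, ← Real.rpow_natCast, ← Real.rpow_mul hγ.le, ← Real.rpow_mul hγ.le]
    ring_nf
  rw [Fin.sum_univ_eq_sum_range (fun r => (γ ^ ((r : ℝ) / N)) ^ 2),
    sum_congr rfl fun r _ => hterm r]
  unfold PsiFn
  split_ifs with h1
  · simp [q, h1]
  · have hqN : q ^ N = γ ^ 2 := by
      rw [← Real.rpow_natCast, ← Real.rpow_mul hγ.le, div_mul_cancel₀ _ (Nat.cast_ne_zero.2 hN)]
      norm_cast
    have hq1 : q ≠ 1 := by
      intro h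
      exact h1 ((pow_eq_one_iff_of_nonneg hγ.le two_ne_zero).1 (by rw [← hqN, h, one_pow]))
    rw [geom_sum_eq hq1, hqN, ← neg_div_neg_eq, neg_sub, neg_sub]

lemma sq_mul_sum_norm_sq_le {ι 𝕜 : Type*} [Fintype ι] [RCLike 𝕜] {a : ℝ} {w : ι → ℝ}
    (ha : 0 ≤ a) (haw : ∀ j, a ≤ w j) (x : ι → 𝕜) :
    a ^ 2 * ∑ j, ‖x j‖ ^ 2 ≤ ∑ j, ‖(w j : 𝕜) * x j‖ ^ 2 := by
  rw [mul_sum]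
  refine sum_le_sum fun j _ => ?_
  rw [norm_mul, RCLike.norm_ofReal, mul_pow, sq_abs]
  gcongr
  exact haw j

lemma sum_norm_sq_le_sq_mul {ι 𝕜 : Type*} [Fintype ι] [RCLike 𝕜] {b : ℝ} {w : ι → ℝ}
    (hw : ∀ j, 0 ≤ w j) (hwb : ∀ j, w j ≤ b) (x : ι → 𝕜) :
    ∑ j, ‖(w j : 𝕜) * x j‖ ^ 2 ≤ b ^ 2 * ∑ j, ‖x j‖ ^ 2 := by
  rw [mul_sum]
  refine sum_le_sum fun j _ => ?_
  rw [norm_mul, RCLike.norm_ofReal, mul_pow, sq_abs]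
  gcongr
  · exact hw j
  · exact hwb j

lemma le_sum_norm_sq_transpose_vandermonde_mulVec {m : ℕ} (v : Fin m → ℝ) (y : Fin m → ℂ) :
    (((m - 1 : ℕ) : ℝ) / sigmaSq m v) ^ (m - 1) * pairProd m v ^ 2 * ∑ j, ‖y j‖ ^ 2
      ≤ ∑ k, ‖((vandermonde fun j => (v j : ℂ))ᵀ *ᵥ y) k‖ ^ 2 := by
  have h := card_sub_one_div_pow_mul_norm_det_sq_mul_le (vandermonde fun j => (v j : ℂ))ᵀ y
  rwa [Fintype.card_fin, sum_sum_norm_sq_transpose_vandermonde_ofReal, det_transpose,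
    norm_det_vandermonde_ofReal_eq_pairProd] at h

lemma sum_norm_sq_transpose_vandermonde_mulVec_le {m : ℕ} (v : Fin m → ℝ) (y : Fin m → ℂ) :
    ∑ k, ‖((vandermonde fun j => (v j : ℂ))ᵀ *ᵥ y) k‖ ^ 2 ≤ sigmaSq m v * ∑ j, ‖y j‖ ^ 2 :=
  sum_sum_norm_sq_transpose_vandermonde_ofReal m v ▸ sum_norm_sq_mulVec_le _ y

lemma mul_PsiFn_mul_le_sum_norm_sq_VandW_mulVec {m N : ℕ} (hN : N ≠ 0) {v : Fin m → ℝ}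
    (hpos : ∀ j, 0 < v j) {γ : ℝ} (hγ : 0 < γ) (hγv : ∀ j, γ ≤ v j) (x : Fin m → ℂ) :
    (((m - 1 : ℕ) : ℝ) / sigmaSq m v) ^ (m - 1) * pairProd m v ^ 2 * PsiFn N γ *
        ∑ j, ‖x j‖ ^ 2
      ≤ ∑ i, ‖(VandW m N v *ᵥ x) i‖ ^ 2 := by
  rw [sum_norm_sq_VandW_mulVec hN hpos, PsiFn_eq_sum hN hγ, mul_sum _ _ (_ * _ ^ 2), sum_mul]
  refine sum_le_sum fun r _ => ?_
  calc _ = _ * ((γ ^ ((r : ℝ) / N)) ^ 2 * ∑ j, ‖x j‖ ^ 2) := mul_assoc _ _ _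
    _ ≤ _ * ∑ j, ‖((v j ^ ((r : ℝ) / N) : ℝ) : ℂ) * x j‖ ^ 2 := by
      have := sigmaSq_nonneg m v
      refine mul_le_mul_of_nonneg_left ?_ (by positivity)
      exact sq_mul_sum_norm_sq_le (Real.rpow_nonneg hγ.le _)
        (fun j => Real.rpow_le_rpow hγ.le (hγv j) (by positivity)) x
    _ ≤ _ := le_sum_norm_sq_transpose_vandermonde_mulVec v _

lemma sum_norm_sq_VandW_mulVec_le {m N : ℕ} (hN : N ≠ 0) {v : Fin m → ℝ}
    (hpos : ∀ j, 0 < v j) {γ : ℝ} (hγ : 0 < γ) (hvγ : ∀ j, v j ≤ γ) (x : Fin m → ℂ) :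
    ∑ i, ‖(VandW m N v *ᵥ x) i‖ ^ 2 ≤ sigmaSq m v * PsiFn N γ * ∑ j, ‖x j‖ ^ 2 := by
  rw [sum_norm_sq_VandW_mulVec hN hpos, PsiFn_eq_sum hN hγ, mul_sum _ _ (sigmaSq m v), sum_mul]
  refine sum_le_sum fun r _ => ?_
  calc _ ≤ sigmaSq m v * ∑ j, ‖((v j ^ ((r : ℝ) / N) : ℝ) : ℂ) * x j‖ ^ 2 :=
        sum_norm_sq_transpose_vandermonde_mulVec_le v _
    _ ≤ sigmaSq m v * ((γ ^ ((r : ℝ) / N)) ^ 2 * ∑ j, ‖x j‖ ^ 2) := by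
      refine mul_le_mul_of_nonneg_left ?_ (sigmaSq_nonneg m v)
      exact sum_norm_sq_le_sq_mul (fun j => Real.rpow_nonneg (hpos j).le _)
        (fun j => Real.rpow_le_rpow (hpos j).le (hvγ j) (by positivity)) x
    _ = _ := (mul_assoc _ _ _).symm

theorem stmt1_general (m N : ℕ) (hm : 1 ≤ m) (hN : 1 ≤ N)
    (v : Fin m → ℝ) (hpos : ∀ j, 0 < v j)
    (γlo γhi : ℝ)
    (hlo : IsLeast (Set.range v) γlo) (hhi : IsGreatest (Set.range v) γhi)
    (x : Fin m → ℂ) :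
    ((((m:ℝ)-1)/sigmaSq m v) ^ (((m:ℝ)-1)/2) * pairProd m v)^2 * PsiFn N γlo *
        (∑ j, ‖x j‖^2)
      ≤ ∑ i, ‖(VandW m N v *ᵥ x) i‖^2
    ∧ ∑ i, ‖(VandW m N v *ᵥ x) i‖^2
      ≤ sigmaSq m v * PsiFn N γhi * (∑ j, ‖x j‖^2) := by
  have hN0 : N ≠ 0 := by omega
  obtain ⟨⟨j₀, rfl⟩, hlo⟩ := hlo
  obtain ⟨⟨j₁, rfl⟩, hhi⟩ := hhi
  have hm' : ((m - 1 : ℕ) : ℝ) = (m : ℝ) - 1 := by rw [Nat.cast_sub hm, Nat.cast_one]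
  have ha : 0 ≤ ((m : ℝ) - 1) / sigmaSq m v :=
    div_nonneg (hm' ▸ Nat.cast_nonneg _) (sigmaSq_nonneg m v)
  have hα : ((((m : ℝ) - 1) / sigmaSq m v) ^ (((m : ℝ) - 1) / 2) * pairProd m v) ^ 2
      = (((m - 1 : ℕ) : ℝ) / sigmaSq m v) ^ (m - 1) * pairProd m v ^ 2 := by
    rw [hm', ← Real.rpow_natCast (((m : ℝ) - 1) / sigmaSq m v), hm', mul_pow,
      ← Real.rpow_natCast _ 2, ← Real.rpow_mul ha]
    norm_num
  rw [hα]
  exact ⟨mul_PsiFn_mul_le_sum_norm_sq_VandW_mulVec hN0 hpos (hpos j₀) (fun j => hlo ⟨j, rfl⟩) x,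
    sum_norm_sq_VandW_mulVec_le hN0 hpos (hpos j₁) (fun j => hhi ⟨j, rfl⟩) x⟩

/-- Lemma on Vandermonde matrices (Lemma `lemV`). -/
theorem stmt1 (m N : ℕ) (hm : 1 ≤ m) (hN : 1 ≤ N)
    (v : Fin m → ℝ) (hpos : ∀ j, 0 < v j) (hinj : Function.Injective v)
    (γlo γhi : ℝ)
    (hlo : IsLeast (Set.range v) γlo) (hhi : IsGreatest (Set.range v) γhi)
    (x : Fin m → ℂ) :
    ((((m:ℝ)-1)/sigmaSq m v) ^ (((m:ℝ)-1)/2) * pairProd m v)^2 * PsiFn N γlo *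
        (∑ j, ‖x j‖^2)
      ≤ ∑ i, ‖(VandW m N v *ᵥ x) i‖^2
    ∧ ∑ i, ‖(VandW m N v *ᵥ x) i‖^2
      ≤ sigmaSq m v * PsiFn N γhi * (∑ j, ‖x j‖^2) :=
  stmt1_general m N hm hN v hpos γlo γhi hlo hhi x
end
end

section
/- Let c > 0, let φ ∈ Φ_c with φ̂ even on [−c,c], and let m ≥ 2 be an integer. Then there exists ξ ∈ [0,1] such that the sampled diffusion matrix ℬ_m(ξ) is not invertible; in particular inf_{ξ∈[0,1]} λ_min(ℬ_m(ξ)) = 0, where λ_min denotes the smallest eigenvalue of a positive semidefinite Hermitian matrix. -/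
open MeasureTheory Matrix
open scoped Real BigOperators

noncomputable section

/-!
At `ξ = 1/2` the first and last sampling points `c/m` and `2c - c/m` are reflections of each
other modulo `2c`, so the evenness of `φ̂` makes the first and last columns of `ℬ_m(1/2)` equal
and `ℬ_m(1/2)` is singular. On the other hand `ℬ_m(ξ)` is the Gram matrix of the functions
`t ↦ aⱼ^t` in `L²[0,1]`, with `aⱼ ≥ κ > 0` the sampled values of `(φ̂)_p`; so its quadratic form
is `∫₀¹ |∑ⱼ xⱼ aⱼ^t|² dt ≥ 0`, and a normalized kernel vector of `ℬ_m(1/2)` attains the value `0`.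
-/

lemma per_eq_of_mem_Ico {c : ℝ} (hc : 0 < c) (g : ℝ → ℝ) {x : ℝ} (k : ℤ)
    (h : x - 2 * c * k ∈ Set.Ico (-c) c) :
    per c g x = g (x - 2 * c * k) := by
  have hk : ⌊(x + c) / (2 * c)⌋ = k := by
    rw [Int.floor_eq_iff, le_div_iff₀ (by linarith), div_lt_iff₀ (by linarith)]
    constructor <;> linarith [h.1, h.2]
  rw [per, hk]

lemma abs_sub_two_mul_floor_le {c : ℝ} (hc : 0 < c) (x : ℝ) :
    |x - 2 * c * ⌊(x + c) / (2 * c)⌋| ≤ c := by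
  have h2c : 0 < 2 * c := by linarith
  have h1 := (le_div_iff₀ h2c).mp (Int.floor_le ((x + c) / (2 * c)))
  have h2 := (div_lt_iff₀ h2c).mp (Int.lt_floor_add_one ((x + c) / (2 * c)))
  rw [abs_le]; constructor <;> nlinarith

lemma per_neg_add_two_mul_eq {c : ℝ} (hc : 0 < c) {g : ℝ → ℝ}
    (heven : ∀ ξ, |ξ| ≤ c → g (-ξ) = g ξ) {y : ℝ} (hy : |y| < c) :
    per c g (-y + 2 * c) = per c g y := by
  obtain ⟨hy₁, hy₂⟩ := abs_lt.mp hy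
  rw [per_eq_of_mem_Ico hc g 1 ⟨by push_cast; linarith, by push_cast; linarith⟩,
    per_eq_of_mem_Ico hc g 0 ⟨by push_cast; linarith, by push_cast; linarith⟩]
  push_cast
  rw [show -y + 2 * c - 2 * c * 1 = -y by ring, heven y hy.le, mul_zero, sub_zero]

lemma InPhi.per_phihat_pos {c : ℝ} (hc : 0 < c) {φ : ℝ → ℂ} (hφ : InPhi c φ) (x : ℝ) :
    0 < per c (phihat φ) x := by
  obtain ⟨-, -, κ, hκ, hbound⟩ := hφ
  exact hκ.trans_le (hbound _ (abs_sub_two_mul_floor_le hc x)).2.1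

lemma re_star_dotProduct_gram_mulVec_nonneg {ι : Type*} [Fintype ι] {f : ι → ℝ → ℝ}
    (hf : ∀ j, Continuous (f j)) {a b : ℝ} (hab : a ≤ b) (x : ι → ℂ) :
    0 ≤ (star x ⬝ᵥ (Matrix.of (fun j k => ((∫ t in a..b, f j t * f k t : ℝ) : ℂ)) *ᵥ x)).re := by
  set w : ℝ → ℂ := fun t => ∑ j, (f j t : ℂ) * x j
  have hcont : ∀ j k, Continuous fun t => star (x j) * ((f j t * f k t : ℝ) : ℂ) * x k :=
    fun j k => by fun_prop
  have hpoint : ∀ t, ((Complex.normSq (w t) : ℝ) : ℂ)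
      = ∑ j, ∑ k, star (x j) * ((f j t * f k t : ℝ) : ℂ) * x k := fun t => by
    rw [Complex.normSq_eq_conj_mul_self, map_sum, Finset.sum_mul_sum]
    refine Finset.sum_congr rfl fun j _ => Finset.sum_congr rfl fun k _ => ?_
    simp only [map_mul, Complex.conj_ofReal, Complex.ofReal_mul, Complex.star_def]
    ring
  have hquad : star x ⬝ᵥ (Matrix.of (fun j k => ((∫ t in a..b, f j t * f k t : ℝ) : ℂ)) *ᵥ x)
      = ∫ t in a..b, ((Complex.normSq (w t) : ℝ) : ℂ) := by
    simp only [hpoint]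
    rw [intervalIntegral.integral_finsetSum fun j _ =>
      (continuous_finsetSum _ fun k _ => hcont j k).intervalIntegrable a b]
    refine Finset.sum_congr rfl fun j _ => ?_
    rw [intervalIntegral.integral_finsetSum fun k _ => (hcont j k).intervalIntegrable a b,
      mulVec, dotProduct, Finset.mul_sum]
    refine Finset.sum_congr rfl fun k _ => ?_
    rw [intervalIntegral.integral_mul_const, intervalIntegral.integral_const_mul,
      intervalIntegral.integral_ofReal, Matrix.of_apply, Pi.star_apply, mul_assoc]
  rw [hquad, intervalIntegral.integral_ofReal, Complex.ofReal_re]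
  exact intervalIntegral.integral_nonneg hab fun t _ => Complex.normSq_nonneg _

lemma exists_sum_norm_sq_eq_one_mulVec_eq_zero {n : Type*} [Fintype n] [DecidableEq n]
    {A : Matrix n n ℂ} (h : A.det = 0) : ∃ x : n → ℂ, ∑ j, ‖x j‖ ^ 2 = 1 ∧ A *ᵥ x = 0 := by
  obtain ⟨v, hv, hAv⟩ := exists_mulVec_eq_zero_iff.mpr h
  obtain ⟨j₀, hj₀⟩ := Function.ne_iff.mp hv
  set s := ∑ j, ‖v j‖ ^ 2
  have hs : 0 < s := Finset.sum_pos' (fun j _ => by positivity)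
    ⟨j₀, Finset.mem_univ _, pow_pos (norm_pos_iff.mpr hj₀) 2⟩
  refine ⟨((√s)⁻¹ : ℂ) • v, ?_, by rw [mulVec_smul, hAv, smul_zero]⟩
  simp only [Pi.smul_apply, smul_eq_mul, norm_mul, mul_pow, ← Finset.mul_sum]
  rw [norm_inv, Complex.norm_real, Real.norm_of_nonneg (Real.sqrt_nonneg s), inv_pow,
    Real.sq_sqrt hs.le, inv_mul_cancel₀ hs.ne']

lemma re_star_dotProduct_Bmat_mulVec_nonneg {c : ℝ} {g : ℝ → ℝ} (hg : ∀ x, 0 < per c g x)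
    (m : ℕ) (ξ : ℝ) (x : Fin m → ℂ) : 0 ≤ (star x ⬝ᵥ (Bmat c g m ξ *ᵥ x)).re :=
  re_star_dotProduct_gram_mulVec_nonneg
    (f := fun (j : Fin m) t => per c g (2 * c / m * (ξ + (j : ℕ))) ^ t)
    (fun _ => continuous_const.rpow continuous_id fun _ => Or.inl (hg _).ne') zero_le_one x

lemma det_Bmat_one_half_eq_zero {c : ℝ} (hc : 0 < c) {g : ℝ → ℝ}
    (heven : ∀ ξ, |ξ| ≤ c → g (-ξ) = g ξ) {m : ℕ} (hm : 2 ≤ m) :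
    (Bmat c g m (1 / 2)).det = 0 := by
  have hm₀ : (0 : ℝ) < m := by positivity
  have hcm : |c / m| < c := by
    rw [abs_of_pos (by positivity), div_lt_iff₀ hm₀]
    nlinarith [show (2 : ℝ) ≤ m by exact_mod_cast hm]
  have hsample : per c g (2 * c / m * (1 / 2 + ((0 : ℕ) : ℝ)))
      = per c g (2 * c / m * (1 / 2 + ((m - 1 : ℕ) : ℝ))) := by
    rw [Nat.cast_sub (by omega), Nat.cast_one, Nat.cast_zero,
      show 2 * c / m * (1 / 2 + 0) = c / m by ring,
      show 2 * c / m * (1 / 2 + (m - 1)) = -(c / m) + 2 * c by field_simp; ring,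
      per_neg_add_two_mul_eq hc heven hcm]
  refine det_zero_of_column_eq (i := ⟨0, by omega⟩) (j := ⟨m - 1, by omega⟩)
    (by simp only [ne_eq, Fin.mk.injEq]; omega) fun i => ?_
  simp only [Bmat, of_apply, hsample]

/-- Remark `vecvsper`: for symmetric kernels the sampled diffusion matrix
degenerates at some `ξ ∈ [0,1]`, and `inf_ξ λ_min(ℬ_m(ξ)) = 0`. -/
theorem stmt4 (c : ℝ) (hc : 0 < c) (φ : ℝ → ℂ) (hφ : InPhi c φ)
    (heven : ∀ ξ : ℝ, |ξ| ≤ c → FT φ (-ξ) = FT φ ξ)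
    (m : ℕ) (hm : 2 ≤ m) :
    (∃ ξ ∈ Set.Icc (0:ℝ) 1, ¬ IsUnit (Bmat c (phihat φ) m ξ))
    ∧ sInf {r : ℝ | ∃ ξ ∈ Set.Icc (0:ℝ) 1, ∃ x : Fin m → ℂ,
          (∑ j, ‖x j‖^2) = 1 ∧ r = (star x ⬝ᵥ (Bmat c (phihat φ) m ξ *ᵥ x)).re} = 0 := by
  have hdet : (Bmat c (phihat φ) m (1 / 2)).det = 0 :=
    det_Bmat_one_half_eq_zero hc (fun ξ hξ => congrArg Complex.re (heven ξ hξ)) hm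
  have hhalf : (1 / 2 : ℝ) ∈ Set.Icc 0 1 := by norm_num
  obtain ⟨x, hx, hBx⟩ := exists_sum_norm_sq_eq_one_mulVec_eq_zero hdet
  refine ⟨⟨1 / 2, hhalf, by rw [isUnit_iff_isUnit_det, hdet]; exact not_isUnit_zero⟩,
    IsLeast.csInf_eq ⟨⟨1 / 2, hhalf, x, hx, by rw [hBx, dotProduct_zero, Complex.zero_re]⟩, ?_⟩⟩
  rintro r ⟨ξ, -, y, -, rfl⟩
  exact re_star_dotProduct_Bmat_mulVec_nonneg (hφ.per_phihat_pos hc) m ξ y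
end
end

section
/- For every k ∈ ℕ and every x ∈ ℝ, the Legendre polynomial P_k satisfies |∫_{−1}^1 e^{ixy} P_k(y) dy| ≤ √2 · e^{k+3/2} · |x|^k / (2k+3)^{k+1}. -/
open MeasureTheory Matrix
open scoped Real BigOperators

noncomputable section

/-!
Rodrigues' formula and `k` integrations by parts, whose boundary terms vanish because `±1` are
roots of order `k` of `(y² - 1)^k`, turn the integral into
`(-ix)^k / (2^k k!) · ∫_{-1}^1 e^{ixy} (y² - 1)^k dy`. Its modulus is therefore at most
`|x|^k · 2 / (2k+1)‼`, since `∫_{-1}^1 (1 - y²)^k dy = 2 (2k)‼ / (2k+1)‼`. It remains to see that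
`2 / (2k+1)‼ ≤ √2 e^{k+3/2} / (2k+3)^{k+1}`: the ratio of the right side to the left one
decreases in `k`, because `(1 + 2/(2n+1))^{n+1} ≥ e`, and tends to `1` by Stirling's formula.
-/

open Polynomial Filter Topology
open scoped Nat

theorem eval_iterate_derivative_sq_sub_one_pow_eq_zero {k j : ℕ} (hj : j < k) {t : ℝ}
    (ht : t ^ 2 = 1) : (derivative^[j] ((X ^ 2 - 1) ^ k : ℝ[X])).eval t = 0 := by
  have hdvd : X - C t ∣ (X ^ 2 - 1 : ℝ[X]) := by
    rw [dvd_iff_isRoot]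
    simp [ht]
  have hne : ((X ^ 2 - 1) ^ k : ℝ[X]) ≠ 0 := pow_ne_zero _ (X_pow_sub_C_ne_zero two_pos 1)
  refine isRoot_iterate_derivative_of_lt_rootMultiplicity (hj.trans_le ?_)
  exact (le_rootMultiplicity_iff hne).mpr (pow_dvd_pow_of_dvd hdvd k)

theorem integral_cexp_mul_derivative (x a b : ℝ) (p : ℝ[X]) (ha : p.eval a = 0)
    (hb : p.eval b = 0) :
    ∫ y in a..b, Complex.exp (Complex.I * x * y) * ((p.derivative.eval y : ℝ) : ℂ) =
      -(Complex.I * x) * ∫ y in a..b, Complex.exp (Complex.I * x * y) * ((p.eval y : ℝ) : ℂ) := by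
  have hexp : ∀ y : ℝ, HasDerivAt (fun y : ℝ => Complex.exp (Complex.I * x * y))
      (Complex.I * x * Complex.exp (Complex.I * x * y)) y := fun y => by
    simpa [mul_comm] using (((hasDerivAt_id (y : ℂ)).const_mul (Complex.I * x)).cexp).comp_ofReal
  have hparts := intervalIntegral.integral_mul_deriv_eq_deriv_mul (a := a) (b := b)
    (fun y _ => hexp y) (fun y _ => (p.hasDerivAt y).ofReal_comp)
    (Continuous.intervalIntegrable (by fun_prop) _ _)
    (Continuous.intervalIntegrable (by fun_prop) _ _)
  rw [hparts, ha, hb, ← intervalIntegral.integral_const_mul]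
  simp only [Complex.ofReal_zero, mul_zero, sub_zero, zero_sub, ← intervalIntegral.integral_neg]
  congr 1 with y
  ring

theorem integral_cexp_mul_iterate_derivative (x a b : ℝ) (p : ℝ[X]) (n : ℕ)
    (h : ∀ j < n, (derivative^[j] p).eval a = 0 ∧ (derivative^[j] p).eval b = 0) :
    ∫ y in a..b, Complex.exp (Complex.I * x * y) * (((derivative^[n] p).eval y : ℝ) : ℂ) =
      (-(Complex.I * x)) ^ n *
        ∫ y in a..b, Complex.exp (Complex.I * x * y) * ((p.eval y : ℝ) : ℂ) := by
  induction n with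
  | zero => simp
  | succ n ih =>
    obtain ⟨ha, hb⟩ := h n n.lt_succ_self
    rw [Function.iterate_succ_apply', integral_cexp_mul_derivative x a b _ ha hb,
      ih fun j hj => h j (hj.trans n.lt_succ_self), pow_succ]
    ring

theorem integral_one_sub_sq_pow_succ (k : ℕ) :
    (2 * k + 3 : ℝ) * ∫ y in (-1:ℝ)..1, (1 - y ^ 2) ^ (k + 1) =
      (2 * k + 2) * ∫ y in (-1:ℝ)..1, (1 - y ^ 2) ^ k := by
  have hderiv : ∀ y : ℝ, HasDerivAt (fun y : ℝ => y * (1 - y ^ 2) ^ (k + 1))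
      ((2 * k + 3) * (1 - y ^ 2) ^ (k + 1) - (2 * k + 2) * (1 - y ^ 2) ^ k) y := fun y => by
    refine ((hasDerivAt_id' y).mul
      (((hasDerivAt_pow 2 y).const_sub 1).fun_pow (k + 1))).congr_deriv ?_
    push_cast
    ring
  have hftc := intervalIntegral.integral_eq_sub_of_hasDerivAt (a := -1) (b := 1)
    (fun y _ => hderiv y) (Continuous.intervalIntegrable (by fun_prop) _ _)
  rw [intervalIntegral.integral_sub (Continuous.intervalIntegrable (by fun_prop) _ _)
    (Continuous.intervalIntegrable (by fun_prop) _ _), intervalIntegral.integral_const_mul,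
    intervalIntegral.integral_const_mul] at hftc
  linear_combination hftc

theorem integral_one_sub_sq_pow (k : ℕ) :
    ∫ y in (-1:ℝ)..1, (1 - y ^ 2) ^ k = 2 * ((2 * k)‼ : ℝ) / (2 * k + 1)‼ := by
  induction k with
  | zero => norm_num
  | succ k ih =>
    have hrec := integral_one_sub_sq_pow_succ k
    rw [ih] at hrec
    rw [show 2 * (k + 1) = 2 * k + 2 by ring, show 2 * k + 2 + 1 = 2 * k + 1 + 2 by ring,
      Nat.doubleFactorial_add_two, Nat.doubleFactorial_add_two]
    push_cast
    field_simp at hrec ⊢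
    linear_combination hrec

theorem norm_integral_cexp_mul_sq_sub_one_pow_le (x : ℝ) (k : ℕ) :
    ‖∫ y in (-1:ℝ)..1,
        Complex.exp (Complex.I * x * y) * ((((X ^ 2 - 1) ^ k : ℝ[X]).eval y : ℝ) : ℂ)‖
      ≤ 2 * ((2 * k)‼ : ℝ) / (2 * k + 1)‼ := by
  rw [← integral_one_sub_sq_pow]
  refine intervalIntegral.norm_integral_le_of_norm_le (by norm_num)
    (Eventually.of_forall fun y hy => ?_) (Continuous.intervalIntegrable (by fun_prop) _ _)
  have hy2 : y ^ 2 ≤ 1 := by nlinarith [hy.1, hy.2]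
  rw [norm_mul, mul_assoc, ← Complex.ofReal_mul, Complex.norm_exp_I_mul_ofReal, one_mul,
    Complex.norm_real, Real.norm_eq_abs]
  simp only [eval_pow, eval_sub, eval_X, eval_one, abs_pow]
  rw [abs_sub_comm, abs_of_nonneg (by linarith)]

theorem integral_cexp_mul_legendreP (x : ℝ) (k : ℕ) :
    ∫ y in (-1:ℝ)..1, Complex.exp (Complex.I * x * y) * (((legendreP k).eval y : ℝ) : ℂ) =
      ((1 / ((2:ℝ) ^ k * k !) : ℝ) : ℂ) * (-(Complex.I * x)) ^ k *
        ∫ y in (-1:ℝ)..1,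
          Complex.exp (Complex.I * x * y) * ((((X ^ 2 - 1) ^ k : ℝ[X]).eval y : ℝ) : ℂ) := by
  have hvanish : ∀ j < k, (derivative^[j] ((X ^ 2 - 1) ^ k : ℝ[X])).eval (-1) = 0 ∧
      (derivative^[j] ((X ^ 2 - 1) ^ k : ℝ[X])).eval 1 = 0 := fun j hj =>
    ⟨eval_iterate_derivative_sq_sub_one_pow_eq_zero hj (by norm_num),
      eval_iterate_derivative_sq_sub_one_pow_eq_zero hj (by norm_num)⟩
  rw [mul_assoc, ← integral_cexp_mul_iterate_derivative x (-1) 1 _ k hvanish,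
    ← intervalIntegral.integral_const_mul]
  congr 1 with y
  simp only [legendreP, eval_mul, eval_C, Complex.ofReal_mul]
  ring

theorem norm_integral_cexp_mul_legendreP_le (x : ℝ) (k : ℕ) :
    ‖∫ y in (-1:ℝ)..1, Complex.exp (Complex.I * x * y) * (((legendreP k).eval y : ℝ) : ℂ)‖
      ≤ |x| ^ k * (2 / (2 * k + 1)‼) := by
  rw [integral_cexp_mul_legendreP, norm_mul, norm_mul, norm_pow, norm_neg, norm_mul,
    Complex.norm_I, one_mul, Complex.norm_real, Complex.norm_real, Real.norm_eq_abs,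
    Real.norm_eq_abs, abs_of_pos (by positivity)]
  calc 1 / (2 ^ k * k !) * |x| ^ k * _
      ≤ 1 / (2 ^ k * k !) * |x| ^ k * (2 * ((2 * k)‼ : ℝ) / (2 * k + 1)‼) := by
        gcongr
        exact norm_integral_cexp_mul_sq_sub_one_pow_le x k
    _ = |x| ^ k * (2 / (2 * k + 1)‼) := by
        rw [Nat.doubleFactorial_two_mul]
        push_cast
        field_simp

theorem Real.exp_one_le_one_add_two_div_pow (n : ℕ) :
    Real.exp 1 ≤ (1 + 2 / (2 * n + 1)) ^ (n + 1) := by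
  have hlog : 1 / ((n : ℝ) + 1) ≤ Real.log (1 + 2 / (2 * n + 1)) := by
    convert Real.le_log_one_add_of_nonneg (x := 2 / (2 * n + 1)) (by positivity) using 1
    field_simp
    ring
  calc Real.exp 1 = Real.exp (1 / ((n : ℝ) + 1)) ^ (n + 1) := by
        rw [← Real.exp_nat_mul]; push_cast; field_simp
    _ ≤ (1 + 2 / (2 * n + 1)) ^ (n + 1) := by
        gcongr
        rwa [← Real.le_log_iff_exp_le (by positivity)]

def boundRatio (k : ℕ) : ℝ :=
  √2 * Real.exp (k + 3 / 2) * (2 * k + 1)‼ / (2 * (2 * k + 3) ^ (k + 1))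

theorem boundRatio_antitone : Antitone boundRatio := by
  refine antitone_nat_of_succ_le fun k => ?_
  have hpow : Real.exp 1 * (2 * k + 3) ^ (k + 2) ≤ (2 * k + 5) ^ (k + 2) := by
    calc Real.exp 1 * (2 * k + 3) ^ (k + 2)
        ≤ (1 + 2 / (2 * ((k + 1 : ℕ) : ℝ) + 1)) ^ (k + 2) * (2 * k + 3) ^ (k + 2) :=
          mul_le_mul_of_nonneg_right (Real.exp_one_le_one_add_two_div_pow (k + 1)) (by positivity)
      _ = (2 * k + 5) ^ (k + 2) := by
        rw [← mul_pow]; congr 1; push_cast; field_simp; ring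
  rw [boundRatio, boundRatio, div_le_div_iff₀ (by positivity) (by positivity),
    show 2 * (k + 1) + 1 = 2 * k + 1 + 2 by ring, Nat.doubleFactorial_add_two]
  push_cast
  rw [show (k : ℝ) + 1 + 3 / 2 = 1 + (k + 3 / 2) by ring, Real.exp_add]
  convert mul_le_mul_of_nonneg_left hpow
    (by positivity : (0 : ℝ) ≤ 2 * √2 * Real.exp (k + 3 / 2) * (2 * k + 1)‼) using 1 <;> ring

theorem boundRatio_eq_stirlingSeq (k : ℕ) :
    boundRatio k = Real.exp (1 / 2) *
      (Stirling.stirlingSeq (2 * (k + 1)) / Stirling.stirlingSeq (k + 1)) /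
        (1 + 1 / 2 / (k + 1 : ℕ)) ^ (k + 1) := by
  have hfact : ((2 * (k + 1))! : ℝ) = 2 ^ (k + 1) * (k + 1)! * (2 * k + 1)‼ := by
    rw [show 2 * (k + 1) = 2 * k + 1 + 1 by ring, Nat.factorial_eq_mul_doubleFactorial,
      show 2 * k + 1 + 1 = 2 * (k + 1) by ring, Nat.doubleFactorial_two_mul]
    push_cast
    ring
  have hsqrt : √(2 * (2 * ((k : ℝ) + 1))) = √2 * √(2 * ((k : ℝ) + 1)) :=
    Real.sqrt_mul zero_le_two _
  have hexp : Real.exp (k + 3 / 2) = Real.exp (1 / 2) * Real.exp 1 ^ (k + 1) := by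
    rw [← Real.exp_nat_mul, ← Real.exp_add]
    push_cast
    ring_nf
  simp only [boundRatio, Stirling.stirlingSeq, hfact]
  push_cast
  rw [hsqrt, hexp]
  field_simp
  rw [Real.sq_sqrt zero_le_two]
  simp only [div_pow, mul_pow]
  field_simp
  ring

theorem tendsto_boundRatio_one : Tendsto boundRatio atTop (𝓝 1) := by
  have hs := Stirling.tendsto_stirlingSeq_sqrt_pi
  have hsucc : Tendsto (fun k : ℕ => k + 1) atTop atTop := tendsto_add_atTop_nat 1
  have hdouble : Tendsto (fun k : ℕ => 2 * (k + 1)) atTop atTop :=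
    tendsto_atTop_mono (fun k => by omega) hsucc
  have hpow : Tendsto (fun k : ℕ => (1 + 1 / 2 / (k + 1 : ℕ) : ℝ) ^ (k + 1)) atTop
      (𝓝 (Real.exp (1 / 2))) :=
    (Real.tendsto_one_add_div_pow_exp (1 / 2)).comp hsucc
  have hlim := ((tendsto_const_nhds (x := Real.exp (1 / 2))).mul
    ((hs.comp hdouble).div (hs.comp hsucc) (by positivity))).div hpow (Real.exp_pos _).ne'
  rw [div_self (by positivity), mul_one, div_self (Real.exp_pos _).ne'] at hlim
  exact hlim.congr fun k => (boundRatio_eq_stirlingSeq k).symm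

theorem two_div_doubleFactorial_le (k : ℕ) :
    2 / ((2 * k + 1)‼ : ℝ) ≤ √2 * Real.exp (k + 3 / 2) / (2 * k + 3) ^ (k + 1) := by
  have h := boundRatio_antitone.le_of_tendsto tendsto_boundRatio_one k
  rw [boundRatio, one_le_div (by positivity)] at h
  rw [div_le_div_iff₀ (by positivity) (by positivity)]
  linarith

/-- the bound `|∫_{-1}^1 e^{ixy}P_k(y) dy| ≤ √2·e^{k+3/2}·|x|^k/(2k+3)^{k+1}`. -/
theorem stmt14 (k : ℕ) (x : ℝ) :
    ‖∫ y in (-1:ℝ)..1, Complex.exp (Complex.I * x * y) *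
        ((Polynomial.eval y (legendreP k) : ℝ) : ℂ)‖
      ≤ Real.sqrt 2 * Real.exp ((k:ℝ) + 3/2) * |x|^k / (2*(k:ℝ)+3)^(k+1) := by
  calc _ ≤ |x| ^ k * (2 / (2 * k + 1)‼) := norm_integral_cexp_mul_legendreP_le x k
    _ ≤ |x| ^ k * (√2 * Real.exp (k + 3 / 2) / (2 * k + 3) ^ (k + 1)) :=
        mul_le_mul_of_nonneg_left (two_div_doubleFactorial_le k) (by positivity)
    _ = _ := by ring
end
end

section
/- Let c > 0, L > 0, and let φ ∈ Φ_c be such that φ̂ is C¹-smooth on [−c,c]. Then there exists a finite constant C_{φ,L} > 0 such that for every x ∈ ℝ, ∫₀^L |(sinc(c·) * φ_t)(x)|² dt ≤ C_{φ,L}/(1+x²), where (sinc(c·) * φ_t)(x) = (1/(2c)) ∫_{−c}^{c} φ̂(ξ)^t e^{ixξ} dξ. -/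
open MeasureTheory Matrix
open scoped Real BigOperators

noncomputable section

/-!
The integral `∫_{-c}^{c} φ̂(ξ)^t e^{ixξ} dξ` is at most `2c` in modulus because `0 < φ̂ ≤ 1`
on `[-c, c]`, and one integration by parts against `e^{ixξ}/(ix)` bounds it by `O(1/|x|)`,
uniformly in `t ∈ [0, L]`: the derivative `t φ̂' φ̂^{t-1}` of `φ̂^t` is at most `L sup|φ̂'| / κ`.
So `|(sinc(c·) * φ_t)(x)|² (1 + x²)` is bounded uniformly in `t ∈ [0, L]` and `x`, and
integrating over `t` gives the estimate.
-/

open Set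

theorem norm_cexp_I_mul_ofReal_mul_ofReal (x ξ : ℝ) :
    ‖Complex.exp (Complex.I * x * ξ)‖ = 1 := by
  rw [show Complex.I * x * ξ = ((x * ξ : ℝ) : ℂ) * Complex.I by push_cast; ring]
  exact Complex.norm_exp_ofReal_mul_I _

section OscillatoryIntegral

variable {a b A : ℝ} {u : ℝ → ℂ}

theorem norm_integral_mul_cexp_le (hab : a ≤ b) (hA : ∀ ξ ∈ Icc a b, ‖u ξ‖ ≤ A) (x : ℝ) :
    ‖∫ ξ in a..b, u ξ * Complex.exp (Complex.I * x * ξ)‖ ≤ (b - a) * A := by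
  have hbound : ∀ ξ ∈ uIoc a b, ‖u ξ * Complex.exp (Complex.I * x * ξ)‖ ≤ A := fun ξ hξ => by
    rw [norm_mul, norm_cexp_I_mul_ofReal_mul_ofReal, mul_one]
    exact hA ξ (Ioc_subset_Icc_self (uIoc_of_le hab ▸ hξ))
  simpa [abs_of_nonneg (sub_nonneg.2 hab), mul_comm] using
    intervalIntegral.norm_integral_le_of_norm_le_const hbound

theorem norm_integral_mul_cexp_le_div {A' x : ℝ} {u' : ℝ → ℂ} (hab : a ≤ b) (hx : x ≠ 0)
    (hu : ∀ ξ ∈ Icc a b, HasDerivWithinAt u (u' ξ) (Icc a b) ξ)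
    (hu' : IntervalIntegrable u' volume a b)
    (hA : ∀ ξ ∈ Icc a b, ‖u ξ‖ ≤ A) (hA' : ∀ ξ ∈ Icc a b, ‖u' ξ‖ ≤ A') :
    ‖∫ ξ in a..b, u ξ * Complex.exp (Complex.I * x * ξ)‖ ≤ (2 * A + (b - a) * A') / |x| := by
  have hIx : Complex.I * x ≠ 0 := mul_ne_zero Complex.I_ne_zero (by exact_mod_cast hx)
  set v : ℝ → ℂ := fun ξ => Complex.exp (Complex.I * x * ξ) / (Complex.I * x)
  have hv : ∀ ξ : ℝ, HasDerivAt v (Complex.exp (Complex.I * x * ξ)) ξ := fun ξ => by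
    have := (((Complex.ofRealCLM.hasDerivAt (x := ξ)).const_mul (Complex.I * x)).cexp).div_const
      (Complex.I * x)
    simpa [v, mul_div_cancel_right₀ _ hIx] using this
  have hv_norm : ∀ ξ, ‖v ξ‖ = 1 / |x| := fun ξ => by
    simp [v, norm_cexp_I_mul_ofReal_mul_ofReal]
  have hibp := intervalIntegral.integral_mul_deriv_eq_deriv_mul_of_hasDerivWithinAt
    (uIcc_of_le hab ▸ hu) (fun ξ _ => (hv ξ).hasDerivWithinAt) hu'
    ((by fun_prop : Continuous fun ξ : ℝ => Complex.exp (Complex.I * x * ξ)).intervalIntegrable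
      a b)
  have hremainder : ‖∫ ξ in a..b, u' ξ * v ξ‖ ≤ (b - a) * A' / |x| := by
    have hnorm : ‖Complex.I * x‖ = |x| := by simp
    simp only [v, mul_div_assoc']
    rw [intervalIntegral.integral_div, norm_div, hnorm]
    gcongr
    exact norm_integral_mul_cexp_le hab hA' x
  have hb : ‖u b * v b‖ ≤ A / |x| := by
    rw [norm_mul, hv_norm, mul_one_div]; gcongr; exact hA b ⟨hab, le_rfl⟩
  have ha : ‖u a * v a‖ ≤ A / |x| := by
    rw [norm_mul, hv_norm, mul_one_div]; gcongr; exact hA a ⟨le_rfl, hab⟩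
  calc ‖∫ ξ in a..b, u ξ * Complex.exp (Complex.I * x * ξ)‖
      = ‖u b * v b - u a * v a - ∫ ξ in a..b, u' ξ * v ξ‖ := by rw [← hibp]
    _ ≤ ‖u b * v b‖ + ‖u a * v a‖ + ‖∫ ξ in a..b, u' ξ * v ξ‖ :=
        (norm_sub_le _ _).trans (add_le_add_left (norm_sub_le _ _) _)
    _ ≤ A / |x| + A / |x| + (b - a) * A' / |x| := by gcongr
    _ = (2 * A + (b - a) * A') / |x| := by ring

theorem norm_integral_mul_cexp_sq_mul_le {A' : ℝ} {u' : ℝ → ℂ} (hab : a ≤ b)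
    (hu : ∀ ξ ∈ Icc a b, HasDerivWithinAt u (u' ξ) (Icc a b) ξ)
    (hu' : IntervalIntegrable u' volume a b)
    (hA : ∀ ξ ∈ Icc a b, ‖u ξ‖ ≤ A) (hA' : ∀ ξ ∈ Icc a b, ‖u' ξ‖ ≤ A') (x : ℝ) :
    ‖∫ ξ in a..b, u ξ * Complex.exp (Complex.I * x * ξ)‖ ^ 2 * (1 + x ^ 2)
      ≤ ((b - a) * A) ^ 2 + (2 * A + (b - a) * A') ^ 2 := by
  set I := ‖∫ ξ in a..b, u ξ * Complex.exp (Complex.I * x * ξ)‖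
  have hsmall : I ≤ (b - a) * A := norm_integral_mul_cexp_le hab hA x
  have hdecay : I * |x| ≤ 2 * A + (b - a) * A' := by
    rcases eq_or_ne x 0 with rfl | hx
    · have hA0 : 0 ≤ A := (norm_nonneg _).trans (hA a ⟨le_rfl, hab⟩)
      have hA'0 : 0 ≤ A' := (norm_nonneg _).trans (hA' a ⟨le_rfl, hab⟩)
      have : 0 ≤ b - a := sub_nonneg.2 hab
      simp only [abs_zero, mul_zero]
      positivity
    · exact (le_div_iff₀ (abs_pos.2 hx)).1 (norm_integral_mul_cexp_le_div hab hx hu hu' hA hA')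
  calc I ^ 2 * (1 + x ^ 2) = I ^ 2 + (I * |x|) ^ 2 := by rw [mul_pow, sq_abs]; ring
    _ ≤ ((b - a) * A) ^ 2 + (2 * A + (b - a) * A') ^ 2 := by gcongr

end OscillatoryIntegral

theorem norm_mul_mul_rpow_sub_one_le {κ y d t M L : ℝ} (hκ : 0 < κ) (hy : κ ≤ y) (hy1 : y ≤ 1)
    (hd : ‖d‖ ≤ M) (ht : t ∈ Icc 0 L) : ‖d * t * y ^ (t - 1)‖ ≤ M * L / κ := by
  have hy0 : 0 < y := hκ.trans_le hy
  have hpow : y ^ (t - 1) ≤ 1 / κ := by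
    rw [Real.rpow_sub_one hy0.ne']
    exact div_le_div₀ zero_le_one (Real.rpow_le_one hy0.le hy1 ht.1) hκ hy
  have hM0 : 0 ≤ M := (norm_nonneg _).trans hd
  have hL0 : 0 ≤ L := ht.1.trans ht.2
  have hpow0 : 0 ≤ y ^ (t - 1) := Real.rpow_nonneg hy0.le _
  rw [norm_mul, norm_mul, Real.norm_of_nonneg ht.1, Real.norm_of_nonneg hpow0]
  calc ‖d‖ * t * y ^ (t - 1) ≤ M * L * (1 / κ) := by
        gcongr
        exacts [ht.1, ht.2]
    _ = M * L / κ := by ring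

theorem norm_sincConv_sq_mul_le {c κ M L t : ℝ} {g : ℝ → ℝ} (hc : 0 < c) (hκ : 0 < κ)
    (hg : ContDiffOn ℝ 1 g (Icc (-c) c))
    (hlb : ∀ ξ ∈ Icc (-c) c, κ ≤ g ξ) (hub : ∀ ξ ∈ Icc (-c) c, g ξ ≤ 1)
    (hM : ∀ ξ ∈ Icc (-c) c, ‖derivWithin g (Icc (-c) c) ξ‖ ≤ M) (ht : t ∈ Icc 0 L) (x : ℝ) :
    ‖sincConv c g t x‖ ^ 2 * (1 + x ^ 2)
      ≤ ((2 * c) ^ 2 + (2 + 2 * c * (M * L / κ)) ^ 2) / (2 * c) ^ 2 := by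
  set g' := derivWithin g (Icc (-c) c)
  have hpos : ∀ ξ ∈ Icc (-c) c, 0 < g ξ := fun ξ hξ => hκ.trans_le (hlb ξ hξ)
  have hu : ∀ ξ ∈ Icc (-c) c, HasDerivWithinAt (fun ξ => ((g ξ ^ t : ℝ) : ℂ))
      ((g' ξ * t * g ξ ^ (t - 1) : ℝ) : ℂ) (Icc (-c) c) ξ := fun ξ hξ =>
    (((hg.differentiableOn one_ne_zero) ξ hξ).hasDerivWithinAt.rpow_const
      (Or.inl (hpos ξ hξ).ne')).ofReal_comp
  have hu' : IntervalIntegrable (fun ξ => ((g' ξ * t * g ξ ^ (t - 1) : ℝ) : ℂ)) volume (-c) c := by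
    refine ContinuousOn.intervalIntegrable (uIcc_of_le (neg_le_self hc.le) ▸ ?_)
    have hg' : ContinuousOn g' (Icc (-c) c) :=
      hg.continuousOn_derivWithin (uniqueDiffOn_Icc (by linarith)) le_rfl
    exact Complex.continuous_ofReal.comp_continuousOn ((hg'.mul continuousOn_const).mul
      (hg.continuousOn.rpow_const fun ξ hξ => Or.inl (hpos ξ hξ).ne'))
  have hA : ∀ ξ ∈ Icc (-c) c, ‖((g ξ ^ t : ℝ) : ℂ)‖ ≤ 1 := fun ξ hξ => by
    rw [Complex.norm_real, Real.norm_of_nonneg (Real.rpow_nonneg (hpos ξ hξ).le t)]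
    exact Real.rpow_le_one (hpos ξ hξ).le (hub ξ hξ) ht.1
  have hA' : ∀ ξ ∈ Icc (-c) c, ‖((g' ξ * t * g ξ ^ (t - 1) : ℝ) : ℂ)‖ ≤ M * L / κ :=
    fun ξ hξ => by
    rw [Complex.norm_real]
    exact norm_mul_mul_rpow_sub_one_le hκ (hlb ξ hξ) (hub ξ hξ) (hM ξ hξ) ht
  have hsinc : ‖sincConv c g t x‖ = ‖∫ ξ in (-c)..c, ((g ξ ^ t : ℝ) : ℂ) *
      Complex.exp (Complex.I * x * ξ)‖ / (2 * c) := by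
    rw [sincConv, norm_mul, Complex.norm_real, Real.norm_of_nonneg (by positivity)]
    ring
  rw [hsinc, div_pow, div_mul_eq_mul_div]
  gcongr
  refine (norm_integral_mul_cexp_sq_mul_le (neg_le_self hc.le) hu hu' hA hA' x).trans_eq ?_
  ring

/-- Lemma `lem:estsinc`, upper estimate. -/
theorem stmt15 (c L : ℝ) (hc : 0 < c) (hL : 0 < L)
    (φ : ℝ → ℂ) (hφ : InPhi c φ)
    (hC1 : ContDiffOn ℝ 1 (phihat φ) (Set.Icc (-c) c)) :
    ∃ C : ℝ, 0 < C ∧ ∀ x : ℝ,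
      ∫ t in (0:ℝ)..L, ‖sincConv c (phihat φ) t x‖^2 ≤ C/(1+x^2) := by
  obtain ⟨-, -, κ, hκ, hφκ⟩ := hφ
  have hlb : ∀ ξ ∈ Icc (-c) c, κ ≤ phihat φ ξ := fun ξ hξ => (hφκ ξ (abs_le.2 hξ)).2.1
  have hub : ∀ ξ ∈ Icc (-c) c, phihat φ ξ ≤ 1 := fun ξ hξ => (hφκ ξ (abs_le.2 hξ)).2.2
  obtain ⟨M, hM⟩ := isCompact_Icc.exists_bound_of_continuousOn
    (hC1.continuousOn_derivWithin (uniqueDiffOn_Icc (by linarith)) le_rfl)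
  set D := ((2 * c) ^ 2 + (2 + 2 * c * (M * L / κ)) ^ 2) / (2 * c) ^ 2
  refine ⟨L * D, by positivity, fun x => ?_⟩
  have hpointwise : ∀ t ∈ uIoc 0 L, ‖‖sincConv c (phihat φ) t x‖ ^ 2‖ ≤ D / (1 + x ^ 2) :=
    fun t ht => by
    rw [norm_pow, norm_norm, le_div_iff₀ (by positivity)]
    exact norm_sincConv_sq_mul_le hc hκ hC1 hlb hub hM
      (Ioc_subset_Icc_self (uIoc_of_le hL.le ▸ ht)) x
  calc ∫ t in (0:ℝ)..L, ‖sincConv c (phihat φ) t x‖ ^ 2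
      ≤ ‖∫ t in (0:ℝ)..L, ‖sincConv c (phihat φ) t x‖ ^ 2‖ := Real.le_norm_self _
    _ ≤ D / (1 + x ^ 2) * |L - 0| := intervalIntegral.norm_integral_le_of_norm_le_const hpointwise
    _ = L * D / (1 + x ^ 2) := by rw [sub_zero, abs_of_pos hL]; ring
end
end

section
/- Let c > 0, L > 0, let φ ∈ Φ_c, and let κ ∈ (0,1) be such that κ ≤ φ̂(ξ) ≤ 1 for all |ξ| ≤ c. Set c_{φ,L} = 2(κ^{2L} − 1)/(π² ln κ) > 0. Then for every x ∈ ℝ with |x| ≤ π/(2c), ∫₀^L |(sinc(c·) * φ_t)(x)|² dt ≥ c_{φ,L}, where (sinc(c·) * φ_t)(x) = (1/(2c)) ∫_{−c}^{c} φ̂(ξ)^t e^{ixξ} dξ. -/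
open MeasureTheory Matrix
open scoped Real BigOperators

noncomputable section

/-!
For `|x| ≤ π / (2c)` the factor `cos (x ξ)` is nonnegative on `[-c, c]`, so the real part of
`(sinc(c·) * φ_t)(x)` is at least `κ^t / (2c) · ∫_{-c}^{c} cos (x ξ) dξ = κ^t sinc (x c)`, which is
`≥ 2 κ^t / π` by Jordan's inequality. Integrating `(2 κ^t / π)²` over `[0, L]` gives exactly
`c_{φ,L}`.
-/

open Set

lemma continuous_FT {φ : ℝ → ℂ} (hφ : Integrable φ) : Continuous (FT φ) := by
  have norm_exp (t ξ : ℝ) : ‖Complex.exp (-(Complex.I * t * ξ))‖ = 1 := by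
    rw [show -(Complex.I * t * ξ) = ((-(t * ξ) : ℝ) : ℂ) * Complex.I by push_cast; ring,
      Complex.norm_exp_ofReal_mul_I]
  refine continuous_of_dominated (bound := fun t => ‖φ t‖)
    (fun ξ => (Continuous.aestronglyMeasurable (by fun_prop)).mul hφ.1)
    (fun ξ => ae_of_all _ fun t => by rw [norm_mul, norm_exp, one_mul]) hφ.norm
    (ae_of_all _ fun t => by fun_prop)

lemma two_div_pi_le_sinc {y : ℝ} (hy : |y| ≤ π / 2) : 2 / π ≤ Real.sinc y := by
  wlog hy0 : 0 ≤ y generalizing y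
  · simpa using this (y := -y) (by rwa [abs_neg]) (by linarith)
  rcases hy0.eq_or_lt with rfl | hy0
  · rw [Real.sinc_zero, div_le_one Real.pi_pos]
    exact Real.two_le_pi
  rw [Real.sinc_of_ne_zero hy0.ne', le_div_iff₀ hy0]
  exact Real.mul_le_sin hy0.le ((le_abs_self y).trans hy)

lemma integral_cos_mul (c x : ℝ) :
    ∫ ξ in -c..c, Real.cos (x * ξ) = 2 * c * Real.sinc (x * c) := by
  rcases eq_or_ne x 0 with rfl | hx
  · simp [two_mul]
  rcases eq_or_ne c 0 with rfl | hc
  · simp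
  rw [intervalIntegral.integral_comp_mul_left Real.cos hx, integral_cos, mul_neg, Real.sin_neg,
    Real.sinc_of_ne_zero (mul_ne_zero hx hc), smul_eq_mul]
  field_simp
  ring

lemma re_sincConv {c t x : ℝ} {g : ℝ → ℝ}
    (hg : IntervalIntegrable (fun ξ => g ξ ^ t) volume (-c) c) :
    (sincConv c g t x).re = (2 * c)⁻¹ * ∫ ξ in -c..c, g ξ ^ t * Real.cos (x * ξ) := by
  have hint : IntervalIntegrable
      (fun ξ : ℝ => ((g ξ ^ t : ℝ) : ℂ) * Complex.exp (Complex.I * x * ξ)) volume (-c) c :=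
    IntervalIntegrable.mul_continuousOn ⟨hg.1.ofReal, hg.2.ofReal⟩ (by fun_prop)
  rw [sincConv, Complex.re_ofReal_mul, one_div, ← RCLike.re_eq_complex_re,
    ← intervalIntegral.intervalIntegral_re hint]
  congr 1
  refine intervalIntegral.integral_congr fun ξ _ => ?_
  rw [RCLike.re_eq_complex_re, show Complex.I * x * ξ = ((x * ξ : ℝ) : ℂ) * Complex.I by
    push_cast; ring, Complex.re_ofReal_mul, Complex.exp_ofReal_mul_I_re]

lemma two_div_pi_mul_rpow_le_norm_sincConv {c κ t x : ℝ} {g : ℝ → ℝ} (hc : 0 < c)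
    (hκ : 0 ≤ κ) (hκg : ∀ ξ ∈ Icc (-c) c, κ ≤ g ξ)
    (hg : IntervalIntegrable (fun ξ => g ξ ^ t) volume (-c) c) (ht : 0 ≤ t)
    (hx : |x| ≤ π / (2 * c)) :
    2 / π * κ ^ t ≤ ‖sincConv c g t x‖ := by
  have hxc : |x * c| ≤ π / 2 := by
    rw [abs_mul, abs_of_pos hc]
    calc |x| * c ≤ π / (2 * c) * c := by gcongr
      _ = π / 2 := by field_simp
  have hcos : ∀ ξ ∈ Icc (-c) c, 0 ≤ Real.cos (x * ξ) := fun ξ hξ => by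
    have : |x * ξ| ≤ π / 2 := hxc.trans' <| by
      rw [abs_mul, abs_mul, abs_of_pos hc]
      gcongr
      exact abs_le.2 hξ
    exact Real.cos_nonneg_of_mem_Icc (abs_le.1 this)
  calc 2 / π * κ ^ t ≤ κ ^ t * Real.sinc (x * c) := by
        rw [mul_comm]
        gcongr
        exact two_div_pi_le_sinc hxc
    _ = (2 * c)⁻¹ * ∫ ξ in -c..c, κ ^ t * Real.cos (x * ξ) := by
        rw [intervalIntegral.integral_const_mul, integral_cos_mul]
        field_simp
    _ ≤ (2 * c)⁻¹ * ∫ ξ in -c..c, g ξ ^ t * Real.cos (x * ξ) := by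
        gcongr
        refine intervalIntegral.integral_mono_on (by linarith)
          (Continuous.intervalIntegrable (by fun_prop) _ _) (hg.mul_continuousOn (by fun_prop))
          fun ξ hξ => ?_
        gcongr
        · exact hcos ξ hξ
        · exact hκg ξ hξ
    _ = (sincConv c g t x).re := (re_sincConv hg).symm
    _ ≤ ‖sincConv c g t x‖ := Complex.re_le_norm _

lemma sincConv_congr {c : ℝ} {g g' : ℝ → ℝ} (h : EqOn g g' (uIcc (-c) c)) :
    sincConv c g = sincConv c g' := by
  ext t x
  unfold sincConv
  congr 1
  exact intervalIntegral.integral_congr fun ξ hξ => by simp only [h hξ]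

lemma continuous_sincConv {c x : ℝ} {g : ℝ → ℝ} (hg : Continuous g) (hpos : ∀ ξ, 0 < g ξ) :
    Continuous fun t => sincConv c g t x := by
  refine continuous_const.mul
    (intervalIntegral.continuous_parametric_intervalIntegral_of_continuous' ?_ _ _)
  exact (Complex.continuous_ofReal.comp ((hg.comp continuous_snd).rpow continuous_fst
    fun p => Or.inl (hpos p.2).ne')).mul (by fun_prop)

/-- `rpow` jumps where its base vanishes, as `g` may do off `[-c, c]`; `sincConv` does not
distinguish `g` from `max g κ`, which stays positive. -/
lemma continuous_sincConv_of_le {c κ x : ℝ} {g : ℝ → ℝ} (hc : 0 ≤ c) (hg : Continuous g)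
    (hκ : 0 < κ) (hκg : ∀ ξ ∈ Icc (-c) c, κ ≤ g ξ) :
    Continuous fun t => sincConv c g t x := by
  have hmax : EqOn g (fun ξ => max (g ξ) κ) (uIcc (-c) c) := fun ξ hξ =>
    (max_eq_left (hκg ξ (by rwa [uIcc_of_le (by linarith)] at hξ))).symm
  rw [sincConv_congr hmax]
  exact continuous_sincConv (hg.max continuous_const) fun ξ => hκ.trans_le (le_max_right _ _)

lemma integral_const_rpow {b L : ℝ} (hb : 0 < b) (hb1 : b ≠ 1) :
    ∫ t in (0 : ℝ)..L, b ^ t = (b ^ L - 1) / Real.log b := by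
  have hlog : Real.log b ≠ 0 := Real.log_ne_zero_of_pos_of_ne_one hb hb1
  simp_rw [Real.rpow_def_of_pos hb]
  rw [intervalIntegral.integral_comp_mul_left Real.exp hlog, integral_exp, mul_zero,
    Real.exp_zero, smul_eq_mul, inv_mul_eq_div]

lemma integral_sq_two_div_pi_mul_rpow {κ L : ℝ} (hκ : 0 < κ) (hκ1 : κ ≠ 1) :
    ∫ t in (0 : ℝ)..L, (2 / π * κ ^ t) ^ 2 = cPhiL κ L := by
  have hsq (s : ℝ) : (κ ^ s) ^ 2 = (κ ^ 2) ^ s := by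
    rw [← Real.rpow_natCast, ← Real.rpow_natCast, ← Real.rpow_mul hκ.le, ← Real.rpow_mul hκ.le,
      mul_comm]
  have hκ2 : κ ^ 2 ≠ 1 := by rwa [Ne, pow_eq_one_iff_of_nonneg hκ.le two_ne_zero]
  simp_rw [mul_pow, hsq]
  rw [intervalIntegral.integral_const_mul, integral_const_rpow (by positivity) hκ2, Real.log_pow,
    cPhiL, Real.rpow_mul hκ.le, Real.rpow_two]
  have : Real.log κ ≠ 0 := Real.log_ne_zero_of_pos_of_ne_one hκ hκ1
  field_simp
  ring

lemma cPhiL_pos {κ L : ℝ} (hκ0 : 0 < κ) (hκ1 : κ < 1) (hL : 0 < L) : 0 < cPhiL κ L :=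
  div_pos_of_neg_of_neg
    (by linarith [Real.rpow_lt_one hκ0.le hκ1 (by positivity : 0 < 2 * L)])
    (mul_neg_of_pos_of_neg (by positivity) (Real.log_neg hκ0 hκ1))

theorem stmt16_general (c L : ℝ) (hc : 0 < c) (hL : 0 < L)
    (φ : ℝ → ℂ) (κ : ℝ) (hκ0 : 0 < κ) (hκ1 : κ < 1)
    (hφI : Integrable φ)
    (hbd : ∀ ξ : ℝ, |ξ| ≤ c →
      FT φ ξ = ((FT φ ξ).re : ℂ) ∧ κ ≤ (FT φ ξ).re ∧ (FT φ ξ).re ≤ 1) :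
    0 < cPhiL κ L ∧
    ∀ x : ℝ, |x| ≤ Real.pi/(2*c) →
      cPhiL κ L ≤ ∫ t in (0:ℝ)..L, ‖sincConv c (phihat φ) t x‖^2 := by
  refine ⟨cPhiL_pos hκ0 hκ1 hL, fun x hx => ?_⟩
  have hg : Continuous (phihat φ) := Complex.continuous_re.comp (continuous_FT hφI)
  have hκg : ∀ ξ ∈ Icc (-c) c, κ ≤ phihat φ ξ := fun ξ hξ => (hbd ξ (abs_le.2 hξ)).2.1
  have hκt : Continuous fun t : ℝ => κ ^ t :=
    continuous_const.rpow continuous_id fun _ => Or.inl hκ0.ne'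
  rw [← integral_sq_two_div_pi_mul_rpow hκ0 hκ1.ne]
  refine intervalIntegral.integral_mono_on hL.le
    ((continuous_const.mul hκt).pow 2 |>.intervalIntegrable _ _)
    ((continuous_sincConv_of_le hc.le hg hκ0 hκg).norm.pow 2 |>.intervalIntegrable _ _)
    fun t ht => ?_
  have hgt : IntervalIntegrable (fun ξ => phihat φ ξ ^ t) volume (-c) c :=
    (hg.continuousOn.rpow_const fun _ _ => Or.inr ht.1).intervalIntegrable
  exact pow_le_pow_left₀ (by positivity)
    (two_div_pi_mul_rpow_le_norm_sincConv hc hκ0.le hκg hgt ht.1 hx) 2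

/-- Lemma `lem:estsinc`, lower estimate. -/
theorem stmt16 (c L : ℝ) (hc : 0 < c) (hL : 0 < L)
    (φ : ℝ → ℂ) (κ : ℝ) (hκ0 : 0 < κ) (hκ1 : κ < 1)
    (hφI : Integrable φ) (hφ0 : FT φ 0 = 1)
    (hbd : ∀ ξ : ℝ, |ξ| ≤ c →
      FT φ ξ = ((FT φ ξ).re : ℂ) ∧ κ ≤ (FT φ ξ).re ∧ (FT φ ξ).re ≤ 1) :
    0 < cPhiL κ L ∧
    ∀ x : ℝ, |x| ≤ Real.pi/(2*c) →
      cPhiL κ L ≤ ∫ t in (0:ℝ)..L, ‖sincConv c (phihat φ) t x‖^2 :=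
  stmt16_general c L hc hL φ κ hκ0 hκ1 hφI hbd
end
end
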